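/- arXiv:0912.4651 — 3 statements merged into one kernel-verified Lean document; each statement's English description precedes it below -/
import Mathlib

section
/- Let (A, m) be a one-dimensional Cohen-Macaulay local ring with infinite residue field, xA a minimal reduction of m with reduction number r, and e the multiplicity. Then the constant ρ defined by the Hilbert-Samuel function H^1(n) = e(n+1) − ρ for n ≫ 0 satisfies ρ = e − 1 + Σ_{i=1}^{r−1} λ(m^{i+1}/x m^i). -/
open IsLocalRing Ideal Submodule

open Order


noncomputable def klen (α : Type*) [Preorder α] : ℕ∞ :=
  ⨆ (p : LTSeries α), (p.length : ℕ∞)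

lemma klen_le_of_strictMono {α β : Type*} [Preorder α] [Preorder β] (f : α → β)
    (hf : StrictMono f) : klen α ≤ klen β := by
  refine iSup_le fun p => ?_
  exact le_iSup_of_le (p.map f hf) (by simp [RelSeries.map])

lemma klen_eq_of_orderIso {α β : Type*} [Preorder α] [Preorder β] (f : α ≃o β) :
    klen α = klen β :=
  le_antisymm (klen_le_of_strictMono f f.strictMono)
    (klen_le_of_strictMono f.symm f.symm.strictMono)

lemma exists_last_eq_of_le {α : Type*} [PartialOrder α] (p : LTSeries α) (a : α)
    (h : p.last ≤ a) : ∃ q : LTSeries α, q.last = a ∧ p.length ≤ q.length := by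
  rcases h.lt_or_eq with h | h
  · exact ⟨p.snoc a h, by simp, by simp [RelSeries.snoc_length]⟩
  · exact ⟨p, h, le_rfl⟩

lemma exists_last_eq_of_lt {α : Type*} [PartialOrder α] (p : LTSeries α) (a : α)
    (h : p.last < a) : ∃ q : LTSeries α, q.last = a ∧ p.length + 1 ≤ q.length :=
  ⟨p.snoc a h, by simp, by simp [RelSeries.snoc_length]⟩

/-- key combinatorial lemma: a pair of monotone sequences, at least one strict at
each step, bounds `n` by the sum of lengths of extracted chains. -/
lemma pair_le_klen_add_klen {β γ : Type*} [PartialOrder β] [PartialOrder γ] :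
    ∀ (n : ℕ) (f : Fin (n+1) → β) (g : Fin (n+1) → γ), Monotone f → Monotone g →
    (∀ i : Fin n, f i.castSucc < f i.succ ∨ g i.castSucc < g i.succ) →
    ∃ (p : LTSeries β) (q : LTSeries γ),
      p.last = f (Fin.last n) ∧ q.last = g (Fin.last n) ∧ n ≤ p.length + q.length := by
  intro n
  induction n with
  | zero =>
    intro f g _ _ _
    exact ⟨RelSeries.singleton _ (f 0), RelSeries.singleton _ (g 0), rfl, rfl, by simp⟩
  | succ n ih =>
    intro f g hf hg hstep
    obtain ⟨p, q, hp, hq, hlen⟩ := ih (f ∘ Fin.castSucc) (g ∘ Fin.castSucc)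
      (hf.comp (Fin.strictMono_castSucc.monotone)) (hg.comp (Fin.strictMono_castSucc.monotone))
      (fun i => by
        have := hstep i.castSucc
        exact this)
    have hfle : f (Fin.last n).castSucc ≤ f (Fin.last (n+1)) := hf (Fin.le_last _)
    have hgle : g (Fin.last n).castSucc ≤ g (Fin.last (n+1)) := hg (Fin.le_last _)
    have hlast : (Fin.last n).succ = Fin.last (n+1) := Fin.succ_last n
    have hp' : p.last = f (Fin.last n).castSucc := hp
    have hq' : q.last = g (Fin.last n).castSucc := hq
    rcases hstep (Fin.last n) with h | h
    · rw [hlast] at h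
      obtain ⟨p', hpl', hpl⟩ := exists_last_eq_of_lt p _ (hp' ▸ h)
      obtain ⟨q', hql', hql⟩ := exists_last_eq_of_le q _ (hq' ▸ hgle)
      exact ⟨p', q', hpl', hql', by omega⟩
    · rw [hlast] at h
      obtain ⟨p', hpl', hpl⟩ := exists_last_eq_of_le p _ (hp' ▸ hfle)
      obtain ⟨q', hql', hql⟩ := exists_last_eq_of_lt q _ (hq' ▸ h)
      exact ⟨p', q', hpl', hql', by omega⟩

lemma klen_le_decomp {α : Type*} [Lattice α] [IsModularLattice α] (a : α) :
    klen α ≤ klen {x : α // x ≤ a} + klen {x : α // a ≤ x} := by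
  refine iSup_le fun p => ?_
  obtain ⟨pq, qq, _, _, hlen⟩ := pair_le_klen_add_klen p.length
    (fun i => (⟨p i ⊓ a, inf_le_right⟩ : {x : α // x ≤ a}))
    (fun i => (⟨p i ⊔ a, le_sup_right⟩ : {x : α // a ≤ x}))
    (fun i j hij => by simpa [Subtype.mk_le_mk] using inf_le_inf_right a (p.monotone hij))
    (fun i j hij => by simpa [Subtype.mk_le_mk] using sup_le_sup_right (p.monotone hij) a)
    (fun i => by
      by_contra hcon
      push_neg at hcon
      obtain ⟨h1, h2⟩ := hcon
      have hlt : p i.castSucc < p i.succ := p.step i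
      have e1 : p i.succ ⊓ a ≤ p i.castSucc ⊓ a := by
        have hle : p i.castSucc ⊓ a ≤ p i.succ ⊓ a := inf_le_inf_right a hlt.le
        rcases hle.lt_or_eq with h | h
        · exact absurd (Subtype.mk_lt_mk.2 h) h1
        · exact h.ge
      have e2 : p i.succ ⊔ a ≤ p i.castSucc ⊔ a := by
        have hle : p i.castSucc ⊔ a ≤ p i.succ ⊔ a := sup_le_sup_right hlt.le a
        rcases hle.lt_or_eq with h | h
        · exact absurd (Subtype.mk_lt_mk.2 h) h2
        · exact h.ge
      exact hlt.ne (eq_of_le_of_inf_le_of_sup_le hlt.le e1 e2))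
  calc (p.length : ℕ∞) ≤ ((pq.length + qq.length : ℕ) : ℕ∞) := by exact_mod_cast hlen
    _ = (pq.length : ℕ∞) + (qq.length : ℕ∞) := by push_cast; ring
    _ ≤ _ := add_le_add (le_iSup (fun (p : LTSeries _) => (p.length : ℕ∞)) pq)
        (le_iSup (fun (p : LTSeries _) => (p.length : ℕ∞)) qq)

lemma klen_ge_decomp {α : Type*} [Lattice α] (a : α) :
    klen {x : α // x ≤ a} + klen {x : α // a ≤ x} ≤ klen α := by
  have : Nonempty α := ⟨a⟩
  have h1 : klen {x : α // x ≤ a} ≤ height a := by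
    refine iSup_le fun p => ?_
    have := length_le_height (p := p.map Subtype.val (fun _ _ h => h))
      (x := a) ((p.last).2)
    exact this
  have h2 : klen {x : α // a ≤ x} ≤ coheight a := by
    refine iSup_le fun p => ?_
    have := length_le_coheight (p := p.map Subtype.val (fun _ _ h => h))
      (x := a) ((p.head).2)
    exact this
  have h3 : height a + coheight a ≤ klen α := by
    have := krullDim_eq_iSup_height_add_coheight_of_nonempty (α := α)
    rw [krullDim_eq_iSup_length] at this
    have h4 : (⨆ (p : LTSeries α), (p.length : ℕ∞)) = ⨆ x : α, height x + coheight x :=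
      WithBot.coe_injective this
    rw [klen, h4]
    exact le_iSup (fun x : α => height x + coheight x) a
  exact le_trans (add_le_add h1 h2) h3

lemma klen_decomp {α : Type*} [Lattice α] [IsModularLattice α] (a : α) :
    klen α = klen {x : α // x ≤ a} + klen {x : α // a ≤ x} :=
  le_antisymm (klen_le_decomp a) (klen_ge_decomp a)

/-- Length of a module: the Krull dimension of its submodule lattice. -/
noncomputable def plen (A M : Type*) [CommRing A] [AddCommGroup M] [Module A M] : ℕ∞ :=
  (Order.krullDim (Submodule A M)).unbotD 0

section PlenLemmas

variable {R M N : Type*} [CommRing R] [AddCommGroup M] [Module R M]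
  [AddCommGroup N] [Module R N]

lemma plen_eq_klen : plen R M = klen (Submodule R M) := by
  rw [plen, Order.krullDim_eq_iSup_length, klen]
  rfl

lemma plen_congr (e : M ≃ₗ[R] N) : plen R M = plen R N := by
  rw [plen_eq_klen, plen_eq_klen]
  exact klen_eq_of_orderIso (Submodule.orderIsoMapComap e)

lemma klen_le_one_of_subsingleton {α : Type*} [Preorder α] [Subsingleton α] : klen α ≤ 0 :=
  iSup_le fun p => by
    rcases Nat.eq_zero_or_pos p.length with h | h
    · simp [h]
    · exact absurd (p.step ⟨0, h⟩) (by rw [Subsingleton.elim (p _) (p _)]; exact lt_irrefl _)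

lemma plen_eq_zero_of_subsingleton [Subsingleton M] : plen R M = 0 := by
  have : Subsingleton (Submodule R M) :=
    ⟨fun a b => by ext x; rw [Subsingleton.elim x 0]; simp⟩
  rw [plen_eq_klen]
  exact le_antisymm klen_le_one_of_subsingleton (zero_le)

lemma one_le_plen_of_nontrivial [Nontrivial M] : 1 ≤ plen R M := by
  rw [plen_eq_klen]
  have hbt : (⊥ : Submodule R M) < ⊤ := lt_of_le_of_ne bot_le bot_ne_top
  refine le_trans ?_ (le_iSup (fun (p : LTSeries (Submodule R M)) => (p.length : ℕ∞))
    ((RelSeries.singleton _ ⊥).snoc ⊤ hbt))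
  exact_mod_cast (show 1 ≤ ((RelSeries.singleton _ (⊥ : Submodule R M)).snoc ⊤ hbt).length from le_of_eq rfl)

lemma plen_eq_one_of_simple (h : IsSimpleModule R M) : plen R M = 1 := by
  have : Nontrivial M := IsSimpleModule.nontrivial R M
  refine le_antisymm ?_ one_le_plen_of_nontrivial
  rw [plen_eq_klen]
  refine iSup_le fun p => ?_
  by_contra hc
  push_neg at hc
  have hlen : 2 ≤ p.length := by
    rcases p with ⟨len, _, _⟩
    simp only [RelSeries.length] at hc ⊢
    by_contra hl
    interval_cases len <;> simp_all <;> exact hc (by norm_num)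
  have h1 : p ⟨0, by omega⟩ < p ⟨1, by omega⟩ := by
    have := p.step ⟨0, by omega⟩
    exact this
  have h2 : p ⟨1, by omega⟩ < p ⟨2, by omega⟩ := by
    have := p.step ⟨1, by omega⟩
    exact this
  rcases h.1.eq_bot_or_eq_top (p ⟨1, by omega⟩) with hm | hm
  · rw [hm] at h1; exact not_lt_bot h1
  · rw [hm] at h2; exact not_top_lt h2

lemma plen_add_of_submodule (P : Submodule R M) :
    plen R M = plen R P + plen R (M ⧸ P) := by
  rw [plen_eq_klen, plen_eq_klen, plen_eq_klen, klen_decomp P]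
  congr 1
  · exact klen_eq_of_orderIso (Submodule.MapSubtype.orderIso P).symm
  · exact klen_eq_of_orderIso (Submodule.comapMkQRelIso P).symm

end PlenLemmas

/-- `λ(I/J)`: the length of the `A`-module `I/(I ⊓ J)`. -/
noncomputable def lenQ {A : Type*} [CommRing A] (I J : Ideal A) : ℕ∞ :=
  plen A (↥I ⧸ (Submodule.comap (Submodule.subtype I) J))

section LenQLemmas

variable {A : Type*} [CommRing A]

lemma lenQ_self (I : Ideal A) : lenQ I I = 0 := by
  have h : Submodule.comap (Submodule.subtype I) I = ⊤ := by
    ext x; simpa using x.2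
  rw [lenQ, h]
  have : Subsingleton (↥I ⧸ (⊤ : Submodule A ↥I)) :=
    Submodule.Quotient.subsingleton_iff.2 rfl
  exact plen_eq_zero_of_subsingleton

lemma lenQ_top (J : Ideal A) : lenQ ⊤ J = plen A (A ⧸ J) := by
  refine plen_congr (Submodule.Quotient.equiv _ J (Submodule.topEquiv) ?_)
  ext a
  simp only [Submodule.mem_map, Submodule.mem_comap]
  constructor
  · rintro ⟨y, hy, rfl⟩; exact hy
  · intro ha; exact ⟨⟨a, trivial⟩, ha, rfl⟩

lemma lenQ_add {I J K : Ideal A} (hKJ : K ≤ J) (hJI : J ≤ I) :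
    lenQ I K = lenQ I J + lenQ J K := by
  set cK := Submodule.comap (Submodule.subtype I) K with hcK
  set cJ := Submodule.comap (Submodule.subtype I) J with hcJ
  have hle : cK ≤ cJ := fun y hy => hKJ hy
  have key := plen_add_of_submodule (R := A) (M := ↥I ⧸ cK) (Submodule.map cK.mkQ cJ)
  have e1 : plen A ((↥I ⧸ cK) ⧸ (Submodule.map cK.mkQ cJ)) = lenQ I J :=
    plen_congr (Submodule.quotientQuotientEquivQuotient cK cJ hle)
  have e2 : plen A (Submodule.map cK.mkQ cJ) = lenQ J K := by
    have hrange : LinearMap.range (cK.mkQ.comp cJ.subtype) = Submodule.map cK.mkQ cJ := by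
      rw [LinearMap.range_comp, Submodule.range_subtype]
    have hker : LinearMap.ker (cK.mkQ.comp cJ.subtype) = Submodule.comap cJ.subtype cK := by
      rw [LinearMap.ker_comp, Submodule.ker_mkQ]
    have eqv1 : (↥cJ ⧸ Submodule.comap cJ.subtype cK) ≃ₗ[A] ↥(Submodule.map cK.mkQ cJ) :=
      hker ▸ hrange ▸ LinearMap.quotKerEquivRange (cK.mkQ.comp cJ.subtype)
    have eqv2 : (↥cJ ⧸ Submodule.comap cJ.subtype cK) ≃ₗ[A]
        (↥J ⧸ Submodule.comap (Submodule.subtype J) K) := by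
      refine Submodule.Quotient.equiv _ _ (Submodule.comapSubtypeEquivOfLe hJI) ?_
      ext b
      simp only [Submodule.mem_map, Submodule.mem_comap, Submodule.comapSubtypeEquivOfLe,
        LinearEquiv.coe_mk, LinearMap.coe_mk, AddHom.coe_mk]
      constructor
      · rintro ⟨y, hy, rfl⟩; exact hy
      · intro hb; exact ⟨⟨⟨(b : A), hJI b.2⟩, b.2⟩, hb, rfl⟩
    rw [lenQ, ← plen_congr eqv2, plen_congr eqv1]
  rw [lenQ, key, e1, e2, add_comm]

lemma lenQ_smul {x : A} (hreg : x ∈ nonZeroDivisors A) {I J : Ideal A} (hJI : J ≤ I) :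
    lenQ I J = lenQ (Ideal.span {x} * I) (Ideal.span {x} * J) := by
  have hxmem : ∀ {a : A}, a ∈ I → x * a ∈ Ideal.span {x} * I :=
    fun ha => Ideal.mul_mem_mul (Ideal.mem_span_singleton_self x) ha
  have hcancel : ∀ {a b : A}, x * a = x * b → a = b := by
    intro a b h
    have h0 : (a - b) * x = 0 := by linear_combination h
    exact sub_eq_zero.1 ((mem_nonZeroDivisors_iff.1 hreg).2 _ h0)
  let f : ↥I →ₗ[A] ↥(Ideal.span {x} * I) :=
    { toFun := fun a => ⟨x * a, hxmem a.2⟩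
      map_add' := fun a b => by ext; simp [mul_add]
      map_smul' := fun c a => by ext; simp [smul_eq_mul]; ring }
  have hbij : Function.Bijective f := by
    constructor
    · intro a b h
      exact Subtype.ext (hcancel (congrArg Subtype.val h))
    · rintro ⟨b, hb⟩
      obtain ⟨z, hz, hxz⟩ := Ideal.mem_span_singleton_mul.1 hb
      exact ⟨⟨z, hz⟩, Subtype.ext hxz⟩
  let e := LinearEquiv.ofBijective f hbij
  rw [lenQ, lenQ]
  refine plen_congr (Submodule.Quotient.equiv _ _ e ?_)
  ext b
  simp only [Submodule.mem_map, Submodule.mem_comap, e, f, LinearEquiv.ofBijective,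
    LinearMap.coe_mk, AddHom.coe_mk, LinearEquiv.coe_mk, Submodule.coe_subtype]
  constructor
  · rintro ⟨y, hy, rfl⟩
    exact Ideal.mul_mem_mul (Ideal.mem_span_singleton_self x) hy
  · intro hb
    obtain ⟨z, hz, hxz⟩ := Ideal.mem_span_singleton_mul.1 hb
    exact ⟨⟨z, hJI hz⟩, hz, Subtype.ext hxz⟩

end LenQLemmas

/-- relative length `λ(M/(M ⊓ N))` for submodules of an algebra -/
noncomputable def slen {A Q : Type*} [CommRing A] [CommRing Q] [Algebra A Q]
    (M N : Submodule A Q) : ℕ∞ :=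
  plen A (↥M ⧸ (Submodule.comap (Submodule.subtype M) N))

/-- minimal number of generators of an ideal -/
noncomputable def mu {A : Type*} [CommRing A] (I : Ideal A) : ℕ :=
  sInf {n | ∃ s : Finset A, s.card = n ∧ Ideal.span (s : Set A) = I}

theorem stmt1 {A : Type*} [CommRing A] [IsLocalRing A] [IsNoetherianRing A]
    [Infinite (IsLocalRing.ResidueField A)]
    (hdim : ringKrullDim A = 1)
    (x : A) (hx : x ∈ maximalIdeal A) (hreg : x ∈ nonZeroDivisors A)
    (r : ℕ)
    (hred : maximalIdeal A ^ (r + 1) = Ideal.span {x} * maximalIdeal A ^ r)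
    (hrmin : ∀ s < r, maximalIdeal A ^ (s + 1) ≠ Ideal.span {x} * maximalIdeal A ^ s)
    (e : ℕ) (he : plen A (A ⧸ Ideal.span {x}) = (e : ℕ∞))
    (ρ : ℕ)
    (hρ : ∃ N : ℕ, ∀ n ≥ N,
      (Finset.range (n + 1)).sum
          (fun i => lenQ (maximalIdeal A ^ i) (maximalIdeal A ^ (i + 1)))
        = (e : ℕ∞) * ((n : ℕ∞) + 1) - (ρ : ℕ∞)) :
    (ρ : ℕ∞) = (e : ℕ∞) - 1 +
      (Finset.Icc 1 (r - 1)).sum (fun i => lenQ (maximalIdeal A ^ (i + 1)) (Ideal.span {x} * maximalIdeal A ^ i)) := by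
  set m := maximalIdeal A with hm
  set lam : ℕ → ℕ∞ := fun k => lenQ (m ^ (k+1)) (Ideal.span {x} * m ^ k) with hlam
  set G : ℕ → ℕ∞ := fun n => lenQ ⊤ (m ^ n) with hG
  have hsub : ∀ k : ℕ, Ideal.span {x} * m ^ k ≤ m ^ (k+1) := fun k => by
    calc Ideal.span {x} * m ^ k ≤ m * m ^ k :=
          Ideal.mul_mono_left ((Ideal.span_singleton_le_iff_mem _).2 hx)
      _ = m ^ (k+1) := (pow_succ' m k).symm
  -- the fundamental step identity
  have hstep : ∀ n : ℕ, G (n+1) + lam n = (e : ℕ∞) + G n := by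
    intro n
    have way1 : lenQ ⊤ (Ideal.span {x} * m ^ n) = G (n+1) + lam n :=
      lenQ_add (hsub n) le_top
    have hxle : Ideal.span {x} * m ^ n ≤ Ideal.span {x} := Ideal.mul_le_left
    have way2 : lenQ ⊤ (Ideal.span {x} * m ^ n)
        = lenQ ⊤ (Ideal.span {x}) + lenQ (Ideal.span {x}) (Ideal.span {x} * m ^ n) :=
      lenQ_add hxle le_top
    have hsm : lenQ (Ideal.span {x}) (Ideal.span {x} * m ^ n) = G n := by
      have := (lenQ_smul hreg (I := ⊤) (J := m ^ n) le_top).symm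
      rwa [mul_top] at this
    have hee : lenQ ⊤ (Ideal.span {x}) = (e : ℕ∞) := by rw [lenQ_top, he]
    rw [way1] at way2
    rw [way2, hsm, hee]
  have hG0 : G 0 = 0 := by
    simp only [hG, pow_zero, Ideal.one_eq_top]
    exact lenQ_self ⊤
  -- telescoping
  have htel : ∀ n : ℕ, G (n+1) + (Finset.range (n+1)).sum lam = (e : ℕ∞) * ((n : ℕ∞) + 1) := by
    intro n
    induction n with
    | zero => simpa [hG0] using hstep 0
    | succ n ih =>
      rw [Finset.sum_range_succ]
      calc G (n+2) + ((Finset.range (n+1)).sum lam + lam (n+1))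
          = (G (n+2) + lam (n+1)) + (Finset.range (n+1)).sum lam := by ring
        _ = ((e:ℕ∞) + G (n+1)) + (Finset.range (n+1)).sum lam := by rw [hstep (n+1)]
        _ = (e:ℕ∞) + (G (n+1) + (Finset.range (n+1)).sum lam) := by ring
        _ = (e:ℕ∞) + (e:ℕ∞) * ((n:ℕ∞)+1) := by rw [ih]
        _ = (e:ℕ∞) * ((↑(n+1) : ℕ∞) + 1) := by push_cast; ring
  -- the Hilbert function sum equals G (n+1)
  have hHG : ∀ n : ℕ,
      (Finset.range (n + 1)).sum (fun i => lenQ (m ^ i) (m ^ (i + 1))) = G (n+1) := by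
    intro n
    induction n with
    | zero =>
      rw [Finset.sum_range_one]
      show lenQ (m ^ 0) (m ^ (0+1)) = lenQ ⊤ (m ^ 1)
      rw [pow_zero, Ideal.one_eq_top]
    | succ n ih =>
      rw [Finset.sum_range_succ, ih]
      have : G (n+2) = G (n+1) + lenQ (m ^ (n+1)) (m ^ (n+2)) :=
        lenQ_add (Ideal.pow_le_pow_right (by omega)) le_top
      rw [this]
  -- vanishing of lam for k ≥ r
  have hvan : ∀ k, r ≤ k → lam k = 0 := by
    intro k hk
    have hpow : m ^ (k+1) = Ideal.span {x} * m ^ k := by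
      obtain ⟨t, rfl⟩ := Nat.exists_eq_add_of_le hk
      induction t with
      | zero => simpa using hred
      | succ t ih =>
        have h1 : m ^ (r + (t+1) + 1) = m * m ^ (r + t + 1) := by
          rw [← pow_succ']; ring_nf
        rw [h1, ih (by omega), ← mul_assoc, mul_comm m (Ideal.span {x}), mul_assoc, ← pow_succ']
        ring_nf
    simp only [hlam, hpow]
    exact lenQ_self _
  -- G 1 = 1 via simplicity of the residue field
  have hG1 : G 1 = 1 := by
    have hsimple : IsSimpleModule A (A ⧸ m) :=
      isSimpleModule_iff_isCoatom.2 (Ideal.isMaximal_def.mp (IsLocalRing.maximalIdeal.isMaximal A))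
    simp only [hG, pow_one]
    rw [lenQ_top]
    exact plen_eq_one_of_simple hsimple
  -- e = 1 + lam 0
  have he1 : (e : ℕ∞) = 1 + lam 0 := by
    have := hstep 0
    rw [hG0, add_zero, hG1] at this
    exact this.symm
  obtain ⟨N, hN⟩ := hρ
  set n := max N (max r ρ) with hn
  have hnN : N ≤ n := le_max_left _ _
  have hnr : r ≤ n := le_trans (le_max_left _ _) (le_max_right _ _)
  have hnρ : ρ ≤ n := le_trans (le_max_right _ _) (le_max_right _ _)
  -- split the lam-sum
  have hsplit : (Finset.range (n+1)).sum lam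
      = lam 0 + (Finset.Icc 1 (r-1)).sum lam := by
    have h1 : Finset.range (n+1) = insert 0 (Finset.Icc 1 n) := by
      ext k; simp [Finset.mem_range, Finset.mem_Icc, Finset.mem_insert]; omega
    rw [h1, Finset.sum_insert (by simp)]
    congr 1
    refine (Finset.sum_subset (Finset.Icc_subset_Icc_right (show r - 1 ≤ n by omega)) ?_).symm
    intro k hk hk2
    simp only [Finset.mem_Icc] at hk hk2
    exact hvan k (by omega)
  -- finiteness
  have hEfin : ((e : ℕ∞) * ((n : ℕ∞) + 1)) = ((e * (n+1) : ℕ) : ℕ∞) := by push_cast; ring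
  have hfin : G (n+1) ≠ ⊤ ∧ ((Finset.range (n+1)).sum lam) ≠ ⊤ := by
    have hsum : G (n+1) + (Finset.range (n+1)).sum lam ≠ ⊤ := by
      rw [htel n, hEfin]; exact WithTop.natCast_ne_top _
    exact WithTop.add_ne_top.1 hsum
  obtain ⟨g, hg⟩ := WithTop.ne_top_iff_exists.1 hfin.1
  obtain ⟨c, hc⟩ := WithTop.ne_top_iff_exists.1 hfin.2
  change ((g : ℕ) : ℕ∞) = _ at hg
  change ((c : ℕ) : ℕ∞) = _ at hc
  -- relate to ρ
  have hHn := hN n hnN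
  rw [hHG n] at hHn
  -- e ≥ 1
  have hepos : 1 ≤ e := by
    by_contra h
    have he0 : e = 0 := by omega
    rw [he0] at he1
    simp only [Nat.cast_zero] at he1
    exact absurd he1.symm (by
      intro hcon
      have : (1 : ℕ∞) ≤ 0 := le_trans le_self_add hcon.le
      simp at this)
  -- turn everything into ℕ
  have htel' := htel n
  rw [← hg, ← hc, hEfin] at htel'
  have hgc : g + c = e * (n+1) := by exact_mod_cast htel'
  have hρ' : ρ ≤ e * (n+1) := by
    calc ρ ≤ n := hnρ
      _ ≤ 1 * (n+1) := by omega
      _ ≤ e * (n+1) := Nat.mul_le_mul_right _ hepos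
  have hgval : (g : ℕ∞) = ((e * (n+1) - ρ : ℕ) : ℕ∞) := by
    rw [hg, hHn, hEfin]
    push_cast
    rfl
  have hgval' : g = e * (n+1) - ρ := by exact_mod_cast hgval
  have hρc : ρ = c := by omega
  -- identify c with lam 0 + S and finish
  have h11 : (1 : ℕ∞) + lam 0 - 1 = lam 0 := by
    cases h : lam 0 with
    | top => rfl
    | coe l => exact_mod_cast (by omega : 1 + l - 1 = l)
  rw [hρc, he1, h11, hc, hsplit]
end

section
/- Let (A, m) be a one-dimensional Cohen-Macaulay local ring with infinite residue field, x a generator of a minimal reduction of m, and r the reduction number. Then G(m) is Cohen-Macaulay if and only if (m^n : x^i) = m^{n−i} for some (equivalently, all) i ≥ 1 and all n, if and only if m^i ∩ (m^r : x^{r−i−1}) = m^{i+1} for all 1 ≤ i ≤ r − 2. -/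
open IsLocalRing Ideal Submodule

/-- Cohen-Macaulayness of the tangent cone `G(m)` of a one-dimensional
Cohen-Macaulay local ring, characterized via the Valabrega–Valla criterion
ranging over all principal (minimal) reductions of the maximal ideal. -/
def TangentConeIsCM (A : Type*) [CommRing A] [IsLocalRing A] : Prop :=
  ∀ y : A, y ∈ maximalIdeal A →
    (∃ s : ℕ, maximalIdeal A ^ (s + 1) = Ideal.span {y} * maximalIdeal A ^ s) →
    ∀ n : ℕ, maximalIdeal A ^ n ⊓ Ideal.span {y} = Ideal.span {y} * maximalIdeal A ^ (n - 1)

set_option linter.unusedSectionVars false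
set_option linter.unusedVariables false

section Aux
variable {A : Type*} [CommRing A] [IsLocalRing A]

local notation "𝔪" => maximalIdeal A

lemma mycancel {x a b : A} (hreg : x ∈ nonZeroDivisors A) (h : a * x = b * x) : a = b := by
  have h0 : (a - b) * x = 0 := by rw [sub_mul, h, sub_self]
  have := hreg.2 _ h0
  exact sub_eq_zero.mp this

lemma high {x : A} {r : ℕ}
    (hred : 𝔪 ^ (r + 1) = Ideal.span {x} * 𝔪 ^ r) :
    ∀ j : ℕ, 𝔪 ^ (r + j) = Ideal.span {x ^ j} * 𝔪 ^ r := by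
  intro j
  induction j with
  | zero => simp
  | succ j ih =>
    calc 𝔪 ^ (r + (j + 1)) = 𝔪 ^ (r + j) * 𝔪 := by rw [← pow_succ, Nat.add_assoc]
    _ = Ideal.span {x ^ j} * 𝔪 ^ r * 𝔪 := by rw [ih]
    _ = Ideal.span {x ^ j} * (𝔪 ^ (r+1)) := by rw [mul_assoc, ← pow_succ]
    _ = Ideal.span {x ^ j} * (Ideal.span {x} * 𝔪 ^ r) := by rw [hred]
    _ = Ideal.span {x ^ (j+1)} * 𝔪 ^ r := by
        rw [← mul_assoc, Ideal.span_singleton_mul_span_singleton, ← pow_succ]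

lemma notin [IsNoetherianRing A] {x : A} {r : ℕ} (hx : x ∈ 𝔪)
    (hreg : x ∈ nonZeroDivisors A)
    (hred : 𝔪 ^ (r + 1) = Ideal.span {x} * 𝔪 ^ r) (hr : 1 ≤ r) :
    x ^ (r - 1) ∉ 𝔪 ^ r := by
  intro h
  have hsub : (𝔪 ^ r : Ideal A) ≤ 𝔪 • 𝔪 ^ r := by
    intro z hz
    have h1 : x ^ (r-1) * z ∈ 𝔪 ^ (r + r) := by
      rw [pow_add]; exact Ideal.mul_mem_mul h hz
    rw [high hred r] at h1
    obtain ⟨w, hw, hxw⟩ := Ideal.mem_span_singleton_mul.mp h1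
    -- hxw : x ^ r * w = x ^ (r-1) * z
    have hz' : z = x * w := by
      have hre : x ^ r = x ^ (r-1) * x := by
        rw [← pow_succ]; congr 1; omega
      rw [hre] at hxw
      apply mycancel (pow_mem hreg (r-1))
      linear_combination -hxw
    rw [hz', smul_eq_mul]
    exact Ideal.mul_mem_mul hx hw
  have hbot : (𝔪 ^ r : Ideal A) = ⊥ :=
    Submodule.eq_bot_of_le_smul_of_le_jacobson_bot 𝔪 _ (IsNoetherian.noetherian _) hsub
      (IsLocalRing.maximalIdeal_le_jacobson ⊥)
  have hx0 : x ^ r = 0 := by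
    have := Ideal.pow_mem_pow hx r
    rw [hbot] at this
    simpa using this
  have h10 : (1 : A) = 0 := (pow_mem hreg r).2 1 (by rw [one_mul, hx0])
  exact one_ne_zero h10

end Aux

section Main
variable {A : Type*} [CommRing A] [IsLocalRing A]

local notation "𝔪" => maximalIdeal A

/-- iterate the basic colon property -/
lemma colon_all {x : A} (hx : x ∈ 𝔪)
    (hC : ∀ n : ℕ, (𝔪 ^ (n+1)).colon (Ideal.span {x}) ≤ 𝔪 ^ n) :
    ∀ i n : ℕ, (𝔪 ^ n).colon (Ideal.span {x ^ i}) = 𝔪 ^ (n - i) := by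
  intro i
  induction i with
  | zero =>
    intro n
    ext a
    rw [Ideal.mem_colon_span_singleton]
    simp
  | succ i ih =>
    intro n
    ext a
    rw [Ideal.mem_colon_span_singleton]
    constructor
    · intro h
      cases n with
      | zero => simp
      | succ m =>
        have h1 : a * x ^ i ∈ 𝔪 ^ m := by
          apply hC m
          rw [Ideal.mem_colon_span_singleton, mul_assoc, ← pow_succ]
          exact h
        have h2 : a ∈ (𝔪 ^ m).colon (Ideal.span {x ^ i}) :=
          Ideal.mem_colon_span_singleton.mpr h1
        rw [ih m] at h2
        have : m - i = m + 1 - (i + 1) := by omega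
        rwa [this] at h2
    · intro h
      have h1 : a * x ^ (i+1) ∈ 𝔪 ^ (n - (i+1)) * 𝔪 ^ (i+1) :=
        Ideal.mul_mem_mul h (Ideal.pow_mem_pow hx (i+1))
      rw [← pow_add] at h1
      exact Ideal.pow_le_pow_right (by omega) h1

lemma T_to_Cbase {x : A} {r : ℕ} (hx : x ∈ 𝔪) (hreg : x ∈ nonZeroDivisors A)
    (hred : 𝔪 ^ (r + 1) = Ideal.span {x} * 𝔪 ^ r)
    (hT : TangentConeIsCM A) :
    ∀ n : ℕ, (𝔪 ^ (n+1)).colon (Ideal.span {x}) ≤ 𝔪 ^ n := by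
  intro n a ha
  rw [Ideal.mem_colon_span_singleton] at ha
  have H := hT x hx ⟨r, hred⟩ (n+1)
  have hmem : a * x ∈ 𝔪 ^ (n+1) ⊓ Ideal.span {x} :=
    ⟨ha, Ideal.mem_span_singleton.mpr ⟨a, mul_comm a x⟩⟩
  rw [H] at hmem
  simp only [Nat.add_sub_cancel] at hmem
  obtain ⟨w, hw, hxw⟩ := Ideal.mem_span_singleton_mul.mp hmem
  -- hxw : x * w = a * x
  have : a = w := mycancel hreg (by rw [← hxw]; ring)
  rwa [this]

lemma S1_to_T {x : A} (hx : x ∈ 𝔪) (hreg : x ∈ nonZeroDivisors A)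
    {i : ℕ} (hi : 1 ≤ i)
    (hcol : ∀ n : ℕ, (𝔪 ^ n).colon (Ideal.span {x ^ i}) = 𝔪 ^ (n - i)) :
    TangentConeIsCM A := by
  rintro y hy ⟨s, hs⟩ n
  have hyle : Ideal.span {y} ≤ 𝔪 := by
    rw [Ideal.span_le, Set.singleton_subset_iff]; exact hy
  apply le_antisymm
  · rintro z ⟨hz1, hz2⟩
    obtain ⟨a, rfl⟩ := Ideal.mem_span_singleton.mp hz2
    -- z = y * a, hz1 : y * a ∈ 𝔪 ^ n
    cases n with
    | zero =>
      simp only [Nat.zero_sub, pow_zero, Ideal.one_eq_top, Ideal.mul_top]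
      exact hz2
    | succ m =>
      -- key claim: a ∈ 𝔪 ^ m
      suffices ham : a ∈ 𝔪 ^ m by
        simp only [Nat.add_sub_cancel]
        exact Ideal.mem_span_singleton_mul.mpr ⟨a, ham, rfl⟩
      -- x ^ ((s+1)*i) ∈ span {y^i} * 𝔪 ^ (s*i)
      have hpow : (𝔪 : Ideal A) ^ ((s+1)*i) = Ideal.span {y ^ i} * 𝔪 ^ (s*i) := by
        rw [pow_mul, hs, mul_pow, ← Ideal.span_singleton_pow, ← pow_mul]
      have hxmem : x ^ ((s+1)*i) ∈ Ideal.span {y ^ i} * 𝔪 ^ (s*i) := by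
        rw [← hpow]; exact Ideal.pow_mem_pow hx _
      obtain ⟨w, hw, hyw⟩ := Ideal.mem_span_singleton_mul.mp hxmem
      -- hyw : y ^ i * w = x ^ ((s+1)*i)
      have hyi : y ^ i = y * y ^ (i-1) := by
        rw [← pow_succ']; congr 1; omega
      have key : a * x ^ ((s+1)*i) ∈ 𝔪 ^ (m + (s+1)*i) := by
        have heq : a * x ^ ((s+1)*i) = (y * a) * (y ^ (i-1) * w) := by
          rw [← hyw, hyi]; ring
        have hmem2 : (y * a) * (y ^ (i-1) * w) ∈ 𝔪 ^ (m+1) * (𝔪 ^ (i-1) * 𝔪 ^ (s*i)) :=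
          Ideal.mul_mem_mul hz1 (Ideal.mul_mem_mul (Ideal.pow_mem_pow hy _) hw)
        rw [← pow_add, ← pow_add] at hmem2
        rw [heq]
        have : (m+1) + ((i-1) + s*i) = m + (s+1)*i := by
          have : 1 ≤ i := hi
          cases i with
          | zero => omega
          | succ i0 => ring_nf; omega
        rwa [this] at hmem2
      -- peel off x ^ i factors
      have claim : ∀ t : ℕ, ∀ b : A, b * x ^ (t*i) ∈ 𝔪 ^ (m + t*i) → b ∈ 𝔪 ^ m := by
        intro t
        induction t with
        | zero => intro b hb; simpa using hb
        | succ t ihc =>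
          intro b hb
          have hb' : (b * x ^ (t*i)) * x ^ i ∈ 𝔪 ^ ((m + t*i) + i) := by
            rw [mul_assoc, ← pow_add]
            have e1 : t*i + i = (t+1)*i := by ring
            have e2 : m + t*i + i = m + (t+1)*i := by ring
            rw [e1, e2]; exact hb
          have : b * x ^ (t*i) ∈ (𝔪 ^ ((m + t*i) + i)).colon (Ideal.span {x ^ i}) :=
            Ideal.mem_colon_span_singleton.mpr hb'
          rw [hcol, Nat.add_sub_cancel] at this
          exact ihc b this
      exact claim (s+1) a key
  · cases n with
    | zero =>
      simp only [Nat.zero_sub, pow_zero, Ideal.one_eq_top, Ideal.mul_top, top_inf_eq]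
      exact le_rfl
    | succ m =>
      simp only [Nat.add_sub_cancel]
      refine le_inf ?_ Ideal.mul_le_left
      calc Ideal.span {y} * 𝔪 ^ m ≤ 𝔪 * 𝔪 ^ m := Ideal.mul_mono_left hyle
      _ = 𝔪 ^ (m+1) := (pow_succ' 𝔪 m).symm


lemma S3_to_Cbase [IsNoetherianRing A] {x : A} {r : ℕ} (hx : x ∈ 𝔪)
    (hreg : x ∈ nonZeroDivisors A)
    (hred : 𝔪 ^ (r + 1) = Ideal.span {x} * 𝔪 ^ r)
    (hS3 : ∀ i, 1 ≤ i → i ≤ r - 2 →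
      𝔪 ^ i ⊓ (𝔪 ^ r).colon (Ideal.span {x ^ (r - i - 1)}) = 𝔪 ^ (i + 1)) :
    ∀ n : ℕ, (𝔪 ^ (n+1)).colon (Ideal.span {x}) ≤ 𝔪 ^ n := by
  have P : ∀ k, k ≤ r → ∀ a : A, a * x ^ (r - k) ∈ 𝔪 ^ r → a ∈ 𝔪 ^ k := by
    intro k
    induction k with
    | zero => intro _ a _; simp
    | succ k ihk =>
      intro hk a ha
      by_cases hkr : k + 1 = r
      · have h0 : a * x ^ 0 ∈ 𝔪 ^ r := by
          rw [show (0:ℕ) = r - (k+1) by omega]; exact ha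
        rw [pow_zero, mul_one] at h0
        rw [hkr]; exact h0
      · cases Nat.eq_zero_or_pos k with
        | inl hk0 =>
          subst hk0
          by_cases hu : a ∈ 𝔪
          · rw [pow_one]; exact hu
          · exfalso
            have hunit : IsUnit a := by
              by_contra h
              exact hu ((IsLocalRing.mem_maximalIdeal _).mpr (mem_nonunits_iff.mpr h))
            obtain ⟨u, rfl⟩ := hunit
            have h2 := (𝔪 ^ r).mul_mem_left (↑u⁻¹) ha
            rw [show r - (0 + 1) = r - 1 by omega, ← mul_assoc,
              Units.inv_mul, one_mul] at h2
            exact notin hx hreg hred (by omega) h2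
        | inr hkpos =>
          have ha1 : a * x ^ (r - k) ∈ 𝔪 ^ r := by
            have heq : a * x ^ (r - k) = (a * x ^ (r - (k+1))) * x := by
              rw [mul_assoc, ← pow_succ]
              congr 2
              omega
            rw [heq]; exact (𝔪 ^ r).mul_mem_right x ha
          have hak : a ∈ 𝔪 ^ k := ihk (by omega) a ha1
          have hS := hS3 k hkpos (by omega)
          have hmem : a ∈ 𝔪 ^ k ⊓ (𝔪 ^ r).colon (Ideal.span {x ^ (r - k - 1)}) := by
            refine ⟨hak, Ideal.mem_colon_span_singleton.mpr ?_⟩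
            rw [show r - k - 1 = r - (k+1) by omega]; exact ha
          rw [hS] at hmem
          exact hmem
  intro n a ha
  rw [Ideal.mem_colon_span_singleton] at ha
  rcases le_or_gt (n+1) r with hle | hlt
  · apply P n (by omega)
    have heq : a * x ^ (r - n) = (a * x) * x ^ (r - (n+1)) := by
      rw [mul_assoc, ← pow_succ']
      congr 2
      omega
    rw [heq]
    have h3 := Ideal.mul_mem_mul ha (Ideal.pow_mem_pow hx (r - (n+1)))
    rw [← pow_add] at h3
    rwa [show n+1 + (r - (n+1)) = r by omega] at h3
  · have hhigh := high hred (n + 1 - r)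
    rw [show r + (n+1-r) = n+1 by omega] at hhigh
    rw [hhigh] at ha
    obtain ⟨w, hw, hxw⟩ := Ideal.mem_span_singleton_mul.mp ha
    have hre : x ^ (n+1-r) = x ^ (n-r) * x := by
      rw [← pow_succ]; congr 1; omega
    rw [hre] at hxw
    have ha' : a = x ^ (n - r) * w := by
      apply mycancel hreg
      linear_combination -hxw
    rw [ha']
    have h4 := Ideal.mul_mem_mul (Ideal.pow_mem_pow hx (n-r)) hw
    rw [← pow_add] at h4
    rwa [show n - r + r = n by omega] at h4

end Main

theorem stmt3 {A : Type*} [CommRing A] [IsLocalRing A] [IsNoetherianRing A]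
    [Infinite (IsLocalRing.ResidueField A)]
    (hdim : ringKrullDim A = 1)
    (x : A) (hx : x ∈ maximalIdeal A) (hreg : x ∈ nonZeroDivisors A)
    (r : ℕ)
    (hred : maximalIdeal A ^ (r + 1) = Ideal.span {x} * maximalIdeal A ^ r)
    (hrmin : ∀ s < r, maximalIdeal A ^ (s + 1) ≠ Ideal.span {x} * maximalIdeal A ^ s) :
    (TangentConeIsCM A ↔ ∃ i, 1 ≤ i ∧ ∀ n : ℕ,
      (maximalIdeal A ^ n).colon (Ideal.span {x ^ i}) = maximalIdeal A ^ (n - i)) ∧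
    (TangentConeIsCM A ↔ ∀ i, 1 ≤ i → ∀ n : ℕ,
      (maximalIdeal A ^ n).colon (Ideal.span {x ^ i}) = maximalIdeal A ^ (n - i)) ∧
    (TangentConeIsCM A ↔ ∀ i, 1 ≤ i → i ≤ r - 2 →
      maximalIdeal A ^ i ⊓ (maximalIdeal A ^ r).colon (Ideal.span {x ^ (r - i - 1)}) = maximalIdeal A ^ (i + 1)) := by
  have hcolall : TangentConeIsCM A → ∀ i n : ℕ,
      (maximalIdeal A ^ n).colon (Ideal.span {x ^ i}) = maximalIdeal A ^ (n - i) :=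
    fun hT => colon_all hx (T_to_Cbase hx hreg hred hT)
  refine ⟨⟨fun hT => ⟨1, le_rfl, hcolall hT 1⟩, ?_⟩,
    ⟨fun hT i _ => hcolall hT i, fun h => S1_to_T hx hreg le_rfl (h 1 le_rfl)⟩,
    ⟨?_, ?_⟩⟩
  · rintro ⟨i, hi, hc⟩
    exact S1_to_T hx hreg hi hc
  · intro hT i hi hir
    have hc := hcolall hT (r - i - 1) r
    rw [show r - (r - i - 1) = i + 1 by omega] at hc
    rw [hc]
    exact inf_eq_right.mpr (Ideal.pow_le_pow_right (by omega))
  · intro h3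
    exact S1_to_T hx hreg le_rfl (colon_all hx (S3_to_Cbase hx hreg hred h3) 1)
end

section
/- Let (A, m) be a one-dimensional Cohen-Macaulay local ring with infinite residue field and xA a minimal reduction of m with reduction number r. The first neighborhood ring A' = A[m/x] satisfies: m^n A' = x^n A' for all n, and m^n = x^n A' for all n ≥ r. -/
open IsLocalRing Ideal Submodule

/-- The first neighborhood ring `A' = A[m/x]`, as a subalgebra of the total
ring of fractions of `A`. -/
noncomputable def firstNbhd (A : Type*) [CommRing A] [IsLocalRing A] (x : A) :
    Subalgebra A (FractionRing A) :=
  Algebra.adjoin A {q : FractionRing A | ∃ a ∈ maximalIdeal A,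
    q * algebraMap A (FractionRing A) x = algebraMap A (FractionRing A) a}

/-- The image of `m^n` in the total ring of fractions, as an `A`-submodule. -/
noncomputable def mImg (A : Type*) [CommRing A] [IsLocalRing A] (n : ℕ) :
    Submodule A (FractionRing A) :=
  Submodule.span A (algebraMap A (FractionRing A) ''
    ((maximalIdeal A ^ n : Ideal A) : Set A))

theorem stmt4 {A : Type*} [CommRing A] [IsLocalRing A] [IsNoetherianRing A]
    [Infinite (IsLocalRing.ResidueField A)]
    (hdim : ringKrullDim A = 1)
    (x : A) (hx : x ∈ maximalIdeal A) (hreg : x ∈ nonZeroDivisors A)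
    (r : ℕ)
    (hred : maximalIdeal A ^ (r + 1) = Ideal.span {x} * maximalIdeal A ^ r)
    (hrmin : ∀ s < r, maximalIdeal A ^ (s + 1) ≠ Ideal.span {x} * maximalIdeal A ^ s) :
    (∀ n : ℕ,
      Submodule.span ↥(firstNbhd A x)
          (algebraMap A (FractionRing A) '' ((maximalIdeal A ^ n : Ideal A) : Set A))
        = Submodule.span ↥(firstNbhd A x) {algebraMap A (FractionRing A) x ^ n}) ∧
    (∀ n, r ≤ n →
      algebraMap A (FractionRing A) '' ((maximalIdeal A ^ n : Ideal A) : Set A)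
        = (Submodule.span ↥(firstNbhd A x) {algebraMap A (FractionRing A) x ^ n} :
            Set (FractionRing A))) := by
  unfold firstNbhd
  set K := FractionRing A
  set f := algebraMap A K with hf
  set m := maximalIdeal A with hm
  set A' := Algebra.adjoin A {q : K | ∃ a ∈ m, q * f x = f a} with hA'
  have hXu : IsUnit (f x) := IsLocalization.map_units K ⟨x, hreg⟩
  set u : Kˣ := hXu.unit with hu
  have huX : (u : K) = f x := hXu.unit_spec
  have hinv : (↑u⁻¹ : K) * f x = 1 := by rw [← huX]; exact u.inv_mul
  -- iterated reduction
  have hpow : ∀ j, m ^ (r + j) = Ideal.span {x} ^ j * m ^ r := by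
    intro j
    induction j with
    | zero => simp
    | succ k ih =>
        rw [show r + (k + 1) = (r + k) + 1 from rfl, pow_succ, ih, mul_assoc,
          ← pow_succ m r, hred, pow_succ]
        ring
  have hdouble : ∀ n, r ≤ n → ∀ k, m ^ (n + k) = Ideal.span {x ^ k} * m ^ n := by
    intro n hn k
    obtain ⟨j, rfl⟩ := Nat.exists_eq_add_of_le hn
    rw [show r + j + k = r + (j + k) from by ring, hpow, hpow j, pow_add]
    simp only [Ideal.span_singleton_pow]
    ring
  -- generators of A' divided version
  have hgen : ∀ a ∈ m, f a * ↑u⁻¹ ∈ A' := by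
    intro a ha
    refine Algebra.subset_adjoin ⟨a, ha, ?_⟩
    rw [mul_assoc, hinv, mul_one]
  -- f a * u⁻¹^n ∈ A' for a ∈ m^n
  have hAdiv : ∀ n, ∀ a ∈ m ^ n, f a * (↑u⁻¹ : K) ^ n ∈ A' := by
    intro n
    induction n with
    | zero =>
        intro a _
        rw [pow_zero, mul_one]; exact A'.algebraMap_mem a
    | succ k ih =>
        intro a ha
        rw [pow_succ] at ha
        refine Submodule.mul_induction_on ha ?_ ?_
        · intro b hb c hc
          have : f (b * c) * (↑u⁻¹ : K) ^ (k + 1)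
              = (f b * (↑u⁻¹ : K) ^ k) * (f c * ↑u⁻¹) := by
            rw [_root_.map_mul, pow_succ]; ring
          rw [this]
          exact mul_mem (ih b hb) (hgen c hc)
        · intro y z hy hz
          rw [_root_.map_add, add_mul]
          exact add_mem hy hz
  -- elements of m^n lie in the A'-span of (f x)^n
  have hsub : ∀ n, ∀ a ∈ m ^ n, f a ∈ Submodule.span A' {f x ^ n} := by
    intro n a ha
    rw [Submodule.mem_span_singleton]
    refine ⟨⟨f a * (↑u⁻¹ : K) ^ n, hAdiv n a ha⟩, ?_⟩
    show (f a * (↑u⁻¹ : K) ^ n) * f x ^ n = f a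
    rw [mul_assoc, ← mul_pow, hinv, one_pow, mul_one]
  -- part (b) key: A'-multiples of x^n are images of m^n
  have hmain : ∀ c : K, c ∈ A' → ∀ n, r ≤ n → ∃ a ∈ m ^ n, c * f x ^ n = f a := by
    intro c hc
    refine Algebra.adjoin_induction
      (p := fun c _ => ∀ n, r ≤ n → ∃ a ∈ m ^ n, c * f x ^ n = f a)
      ?_ ?_ ?_ ?_ hc
    · rintro q ⟨b, hb, hq⟩ n hn
      match n with
      | 0 =>
          interval_cases r
          · have hmx : m = Ideal.span {x} := by simpa using hred
            rw [hmx, Ideal.mem_span_singleton] at hb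
            obtain ⟨d, rfl⟩ := hb
            refine ⟨d, by simp, ?_⟩
            have h1 : q * f x = f x * f d := by rw [hq, _root_.map_mul]
            have h2 : f x * q = f x * f d := by rw [mul_comm (f x) q]; exact h1
            simpa using hXu.mul_left_cancel h2
      | k + 1 =>
          refine ⟨b * x ^ k, ?_, ?_⟩
          · rw [pow_succ']
            exact Ideal.mul_mem_mul hb (Ideal.pow_mem_pow hx k)
          · rw [_root_.map_mul, _root_.map_pow, pow_succ', ← mul_assoc, hq]
    · intro a n hn
      exact ⟨a * x ^ n, Ideal.mul_mem_left _ a (Ideal.pow_mem_pow hx n),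
        by rw [_root_.map_mul, _root_.map_pow]⟩
    · rintro y z _ _ hy hz n hn
      obtain ⟨a, haM, ha⟩ := hy n hn
      obtain ⟨b, hbM, hb⟩ := hz n hn
      exact ⟨a + b, add_mem haM hbM, by rw [_root_.map_add, add_mul, ha, hb]⟩
    · rintro y z _ _ hy hz n hn
      obtain ⟨a, haM, ha⟩ := hy n hn
      obtain ⟨b, hbM, hb⟩ := hz n hn
      have habm : a * b ∈ Ideal.span {x ^ n} * m ^ n := by
        rw [← hdouble n hn n, pow_add]
        exact Ideal.mul_mem_mul haM hbM
      obtain ⟨d, hdM, hd⟩ := Ideal.mem_span_singleton_mul.mp habm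
      refine ⟨d, hdM, ?_⟩
      have h2 : (y * z) * (f x ^ n * f x ^ n) = f x ^ n * f d := by
        calc (y * z) * (f x ^ n * f x ^ n) = (y * f x ^ n) * (z * f x ^ n) := by ring
        _ = f a * f b := by rw [ha, hb]
        _ = f (a * b) := by rw [_root_.map_mul]
        _ = f (x ^ n * d) := by rw [hd]
        _ = f x ^ n * f d := by rw [_root_.map_mul, _root_.map_pow]
      have := (hXu.pow n).mul_left_cancel
        (show f x ^ n * (y * z * f x ^ n) = f x ^ n * f d by rw [← h2]; ring)
      exact this
  constructor
  · intro n
    apply le_antisymm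
    · rw [Submodule.span_le]
      rintro z ⟨a, ha, rfl⟩
      exact hsub n a ha
    · rw [Submodule.span_le, Set.singleton_subset_iff]
      refine Submodule.subset_span ⟨x ^ n, Ideal.pow_mem_pow hx n, by rw [_root_.map_pow]⟩
  · intro n hn
    ext z
    constructor
    · rintro ⟨a, ha, rfl⟩
      exact hsub n a ha
    · intro hz
      rw [SetLike.mem_coe, Submodule.mem_span_singleton] at hz
      obtain ⟨c, hc⟩ := hz
      obtain ⟨a, haM, ha⟩ := hmain (c : K) c.2 n hn
      exact ⟨a, haM, by rw [← ha, ← hc]; rfl⟩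
end
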